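/- arXiv:1907.06569 — 4 statements merged into one kernel-verified Lean document; each statement's English description precedes it below -/
import Mathlib

section
/- Let m ≥ 1, let f ∈ MvPolynomial (Fin (m+1)) ℂ be a nonzero homogeneous polynomial of degree d ≥ 1, and let T be a natural number with d ≤ T. Then the ℂ-dimension of the degree-T homogeneous component of the quotient ring ℂ[x₀,…,x_m]/(f) — that is, the finrank of the quotient of the homogeneous submodule of degree T by its intersection with the ideal Ideal.span {f} — equals Nat.choose (T+m) m − Nat.choose (T−d+m) m. (This is the Hilbert function computation showing that a degree d hypersurface of ℙ^m has Hilbert polynomial P_{d,m}(T) = C(T+m,m) − C(T+m−d,m).) -/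
open MvPolynomial

noncomputable def degFinsuppEquivSym (n k : ℕ) :
    {d : Fin n →₀ ℕ // d.degree = k} ≃ Sym (Fin n) k :=
  (Multiset.toFinsupp.toEquiv.symm.subtypeEquiv (fun d => by
    show d.degree = k ↔ Multiset.card (Multiset.toFinsupp.symm d) = k
    rw [Multiset.toFinsupp_symm_apply, Finsupp.card_toMultiset]
    rfl))

noncomputable def homogEquivFinsupp (n k : ℕ) :
    (MvPolynomial.homogeneousSubmodule (Fin n) ℂ k) ≃ₗ[ℂ]
      ({d : Fin n →₀ ℕ | d.degree = k} →₀ ℂ) :=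
  (LinearEquiv.ofEq _ _ (homogeneousSubmodule_eq_finsupp_supported (Fin n) ℂ k)).trans
    (AddMonoidAlgebra.supportedEquivFinsupp _)

instance homogFD (n k : ℕ) :
    Module.Finite ℂ (MvPolynomial.homogeneousSubmodule (Fin n) ℂ k) := by
  haveI : Fintype ↑{d : Fin n →₀ ℕ | d.degree = k} :=
    Fintype.ofEquiv _ (degFinsuppEquivSym n k).symm
  exact Module.Finite.equiv (homogEquivFinsupp n k).symm

lemma finrank_homog (n k : ℕ) :
    Module.finrank ℂ (MvPolynomial.homogeneousSubmodule (Fin n) ℂ k) =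
      Nat.multichoose n k := by
  haveI : Fintype ↑{d : Fin n →₀ ℕ | d.degree = k} :=
    Fintype.ofEquiv _ (degFinsuppEquivSym n k).symm
  rw [(homogEquivFinsupp n k).finrank_eq, Module.finrank_finsupp_self]
  calc Fintype.card ↑{d : Fin n →₀ ℕ | d.degree = k}
      = Fintype.card (Sym (Fin n) k) := Fintype.card_congr (degFinsuppEquivSym n k)
    _ = Nat.multichoose n k := by rw [Sym.card_sym_eq_multichoose, Fintype.card_fin]

lemma mul_homogeneousComponent_eq {m d T : ℕ} (hdT : d ≤ T)
    (f : MvPolynomial (Fin (m + 1)) ℂ) (hf : f.IsHomogeneous d)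
    (h : MvPolynomial (Fin (m + 1)) ℂ)
    (hp : f * h ∈ MvPolynomial.homogeneousSubmodule (Fin (m + 1)) ℂ T) :
    f * homogeneousComponent (T - d) h = f * h := by
  have h0 : homogeneousComponent T (f * h) = f * h := by
    rw [homogeneousComponent_of_mem hp, if_pos rfl]
  have expand : f * h = ∑ i ∈ Finset.range (h.totalDegree + 1),
      f * homogeneousComponent i h := by
    rw [← Finset.mul_sum, sum_homogeneousComponent]
  have step : ∀ i, homogeneousComponent T (f * homogeneousComponent i h) =
      if i = T - d then f * homogeneousComponent i h else 0 := by
    intro i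
    have hmem : f * homogeneousComponent i h ∈
        MvPolynomial.homogeneousSubmodule (Fin (m + 1)) ℂ (d + i) :=
      hf.mul (homogeneousComponent_isHomogeneous i h)
    rw [homogeneousComponent_of_mem hmem]
    by_cases hi : i = T - d
    · rw [if_pos (by omega), if_pos hi]
    · rw [if_neg (by omega), if_neg hi]
  rw [← h0]
  conv_rhs => rw [expand]
  rw [map_sum]
  simp_rw [step]
  rw [Finset.sum_ite_eq' (Finset.range (h.totalDegree + 1)) (T - d)
    (fun i => f * homogeneousComponent i h)]
  by_cases hr : T - d ∈ Finset.range (h.totalDegree + 1)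
  · rw [if_pos hr]
  · rw [if_neg hr, homogeneousComponent_eq_zero _ h (by simp at hr; omega), mul_zero]

/-- Hilbert function of a degree-`d` hypersurface in `ℙ^m`: for `T ≥ d`, the dimension of the
degree-`T` graded piece of `ℂ[x₀,…,x_m]/(f)` is `C(T+m, m) - C(T-d+m, m)`. -/
theorem hilbert_function_hypersurface
    {m d T : ℕ} (hm : 1 ≤ m) (hd : 1 ≤ d) (hdT : d ≤ T)
    (f : MvPolynomial (Fin (m + 1)) ℂ) (hf0 : f ≠ 0) (hf : f.IsHomogeneous d) :
    Module.finrank ℂ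
        (↥(MvPolynomial.homogeneousSubmodule (Fin (m + 1)) ℂ T) ⧸
          Submodule.comap (MvPolynomial.homogeneousSubmodule (Fin (m + 1)) ℂ T).subtype
            ((Ideal.span ({f} : Set (MvPolynomial (Fin (m + 1)) ℂ))).restrictScalars ℂ)) =
      Nat.choose (T + m) m - Nat.choose (T - d + m) m := by
  classical
  set V := MvPolynomial.homogeneousSubmodule (Fin (m + 1)) ℂ T with hV
  set N := Submodule.comap V.subtype
      ((Ideal.span ({f} : Set (MvPolynomial (Fin (m + 1)) ℂ))).restrictScalars ℂ) with hN
  have hmul : ∀ g : MvPolynomial.homogeneousSubmodule (Fin (m + 1)) ℂ (T - d),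
      f * (g : MvPolynomial (Fin (m + 1)) ℂ) ∈ V := by
    intro g
    have := hf.mul ((mem_homogeneousSubmodule _ _).mp g.2)
    rw [hV, mem_homogeneousSubmodule]
    rwa [show d + (T - d) = T by omega] at this
  let φ : (MvPolynomial.homogeneousSubmodule (Fin (m + 1)) ℂ (T - d)) →ₗ[ℂ] V :=
    { toFun := fun g => ⟨f * g, hmul g⟩
      map_add' := fun a b => Subtype.ext (by simp [mul_add])
      map_smul' := fun c a => Subtype.ext (by simp [mul_smul_comm]) }
  have hinj : Function.Injective φ := by
    intro a b hab
    have : f * (a : MvPolynomial (Fin (m + 1)) ℂ) = f * b := congrArg Subtype.val hab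
    exact Subtype.ext (mul_left_cancel₀ hf0 this)
  have hrange : LinearMap.range φ = N := by
    ext p
    simp only [LinearMap.mem_range, hN, Submodule.mem_comap, Submodule.restrictScalars_mem,
      Submodule.subtype_apply, Ideal.mem_span_singleton]
    constructor
    · rintro ⟨g, rfl⟩
      exact ⟨g, rfl⟩
    · rintro ⟨h, hh⟩
      refine ⟨⟨homogeneousComponent (T - d) h, homogeneousComponent_isHomogeneous _ _⟩, ?_⟩
      apply Subtype.ext
      show f * homogeneousComponent (T - d) h = (p : MvPolynomial (Fin (m + 1)) ℂ)
      rw [mul_homogeneousComponent_eq hdT f hf h (hh ▸ p.2), ← hh]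
  have h1 : Module.finrank ℂ V = Nat.multichoose (m + 1) T := finrank_homog _ _
  have h2 : Module.finrank ℂ N = Nat.multichoose (m + 1) (T - d) := by
    rw [← hrange, LinearMap.finrank_range_of_inj hinj, finrank_homog]
  have h3 := Submodule.finrank_quotient_add_finrank N
  have hc : ∀ k : ℕ, Nat.multichoose (m + 1) k = (k + m).choose m := by
    intro k
    rw [Nat.multichoose_eq, show m + 1 + k - 1 = k + m by omega, Nat.choose_symm_add]
  rw [hc] at h1 h2
  omega
end

section
/- Let m ≤ N, let f₀ ∈ MvPolynomial (Fin (m+1)) ℂ be a nonzero homogeneous polynomial of degree d ≥ 1, let f be its image in S := MvPolynomial (Fin (N+1)) ℂ under the variable inclusion Fin (m+1) ↪ Fin (N+1), and let I be the ideal of S generated by f together with the variables x_{m+1},…,x_N. Then for every natural number T with d ≤ T, the ℂ-dimension of the degree-T homogeneous component of S/I — that is, the finrank of the quotient of the homogeneous submodule of degree T of S by its intersection with I — equals Nat.choose (T+m) m − Nat.choose (T−d+m) m. (Hence the subscheme of ℙ^N defined by I, a degree d hypersurface of an m-plane, has Hilbert polynomial P_{d,m}(T) = C(T+m,m) − C(T+m−d,m).)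 -/
open MvPolynomial

noncomputable section HilbertAux

private lemma card_toMultiset_degree {α : Type*} (d : α →₀ ℕ) :
    Multiset.card d.toMultiset = d.degree := by
  rw [Finsupp.card_toMultiset]; rfl

private def degreeSubtypeEquivSym (α : Type*) [DecidableEq α] (T : ℕ) :
    {d : α →₀ ℕ // d.degree = T} ≃ Sym α T where
  toFun d := ⟨d.1.toMultiset, by rw [card_toMultiset_degree]; exact d.2⟩
  invFun s := ⟨Multiset.toFinsupp s.1, by
    rw [← card_toMultiset_degree, Multiset.toFinsupp_toMultiset]; exact s.2⟩
  left_inv d := Subtype.ext (Finsupp.toMultiset_toFinsupp d.1)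
  right_inv s := Subtype.ext (Multiset.toFinsupp_toMultiset s.1)

private lemma finrank_homogeneous (n T : ℕ) :
    Module.finrank ℂ (homogeneousSubmodule (Fin (n + 1)) ℂ T) = (T + n).choose n := by
  rw [homogeneousSubmodule_eq_finsupp_supported]
  rw [show (AddMonoidAlgebra.supported ℂ ℂ {d : Fin (n + 1) →₀ ℕ | d.degree = T} : Submodule ℂ (MvPolynomial (Fin (n + 1)) ℂ))
      = restrictSupport ℂ {d : Fin (n + 1) →₀ ℕ | d.degree = T} from rfl]
  haveI : Fintype ↑{d : Fin (n + 1) →₀ ℕ | d.degree = T} :=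
    Fintype.ofEquiv _ (degreeSubtypeEquivSym (Fin (n + 1)) T).symm
  rw [Module.finrank_eq_card_basis
    (basisRestrictSupport ℂ {d : Fin (n + 1) →₀ ℕ | d.degree = T})]
  have hcard : Fintype.card ↑{d : Fin (n + 1) →₀ ℕ | d.degree = T}
      = Fintype.card (Sym (Fin (n + 1)) T) :=
    Fintype.card_congr (degreeSubtypeEquivSym (Fin (n + 1)) T)
  rw [hcard, Sym.card_sym_eq_choose, Fintype.card_fin]
  have h1 : n + 1 + T - 1 = T + n := by omega
  rw [h1, ← Nat.choose_symm (Nat.le_add_left n T)]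
  congr 1
  omega

private lemma fd_homogeneous (n T : ℕ) :
    FiniteDimensional ℂ (homogeneousSubmodule (Fin (n + 1)) ℂ T) := by
  rw [homogeneousSubmodule_eq_finsupp_supported]
  rw [show (AddMonoidAlgebra.supported ℂ ℂ {d : Fin (n + 1) →₀ ℕ | d.degree = T} : Submodule ℂ (MvPolynomial (Fin (n + 1)) ℂ))
      = restrictSupport ℂ {d : Fin (n + 1) →₀ ℕ | d.degree = T} from rfl]
  haveI : Fintype ↑{d : Fin (n + 1) →₀ ℕ | d.degree = T} :=
    Fintype.ofEquiv _ (degreeSubtypeEquivSym (Fin (n + 1)) T).symm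
  exact Module.Finite.of_basis
    (basisRestrictSupport ℂ {d : Fin (n + 1) →₀ ℕ | d.degree = T})

private lemma homogeneousComponent_mul_left {σ : Type*} {d T : ℕ} (hdT : d ≤ T)
    (f₀ g : MvPolynomial σ ℂ) (hf : f₀.IsHomogeneous d) :
    homogeneousComponent T (f₀ * g) = f₀ * homogeneousComponent (T - d) g := by
  conv_lhs => rw [← sum_homogeneousComponent g]
  rw [Finset.mul_sum, map_sum]
  have key : ∀ i : ℕ, homogeneousComponent T (f₀ * homogeneousComponent i g)
      = if T = d + i then f₀ * homogeneousComponent i g else 0 := fun i =>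
    homogeneousComponent_of_mem
      ((mem_homogeneousSubmodule _ _).mpr
        (hf.mul (homogeneousComponent_isHomogeneous i g)))
  have hcond : ∀ i : ℕ, (T = d + i) ↔ (i = T - d) := fun i => by omega
  simp_rw [key, hcond]
  rw [Finset.sum_ite_eq' (Finset.range (g.totalDegree + 1)) (T - d)]
  by_cases h : T - d ∈ Finset.range (g.totalDegree + 1)
  · rw [if_pos h]
  · rw [if_neg h, homogeneousComponent_eq_zero, mul_zero]
    simp only [Finset.mem_range] at h
    omega

end HilbertAux

/-- A degree-`d` hypersurface of an `m`-plane in `ℙ^N` has Hilbert function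
`C(T+m, m) - C(T-d+m, m)` for `T ≥ d`: if `I = (f, x_{m+1}, …, x_N)` where `f` is the image in
`ℂ[x₀,…,x_N]` of a nonzero homogeneous `f₀ ∈ ℂ[x₀,…,x_m]` of degree `d ≥ 1`, then the
degree-`T` graded piece of `S/I` has dimension `C(T+m, m) - C(T-d+m, m)`. -/
theorem hilbert_function_hypersurface_of_plane
    {m N d : ℕ} (hmN : m ≤ N) (hd : 1 ≤ d)
    (f₀ : MvPolynomial (Fin (m + 1)) ℂ) (hf0 : f₀ ≠ 0) (hf : f₀.IsHomogeneous d)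
    (f : MvPolynomial (Fin (N + 1)) ℂ)
    (hf' : f = MvPolynomial.rename (Fin.castLE (Nat.succ_le_succ hmN)) f₀)
    (I : Ideal (MvPolynomial (Fin (N + 1)) ℂ))
    (hI : I = Ideal.span
      (insert f (MvPolynomial.X '' {i : Fin (N + 1) | m < (i : ℕ)})))
    (T : ℕ) (hdT : d ≤ T) :
    Module.finrank ℂ
        (↥(MvPolynomial.homogeneousSubmodule (Fin (N + 1)) ℂ T) ⧸
          Submodule.comap (MvPolynomial.homogeneousSubmodule (Fin (N + 1)) ℂ T).subtype
            (I.restrictScalars ℂ)) =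
      Nat.choose (T + m) m - Nat.choose (T - d + m) m := by
  classical
  set ι : Fin (m + 1) → Fin (N + 1) := Fin.castLE (Nat.succ_le_succ hmN) with hι
  set g : Fin (N + 1) → MvPolynomial (Fin (m + 1)) ℂ :=
    fun i => if h : (i : ℕ) < m + 1 then MvPolynomial.X ⟨i, h⟩ else 0 with hg
  set φ : MvPolynomial (Fin (N + 1)) ℂ →ₐ[ℂ] MvPolynomial (Fin (m + 1)) ℂ :=
    MvPolynomial.aeval g with hφ
  have hghom : ∀ i, (g i).IsHomogeneous 1 := by
    intro i
    by_cases h : (i : ℕ) < m + 1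
    · have : g i = MvPolynomial.X ⟨i, h⟩ := dif_pos h
      rw [this]; exact MvPolynomial.isHomogeneous_X _ _
    · have : g i = 0 := dif_neg h
      rw [this]; exact MvPolynomial.isHomogeneous_zero _ _ _
  have hφrename : ∀ q : MvPolynomial (Fin (m + 1)) ℂ, φ (MvPolynomial.rename ι q) = q := by
    intro q
    rw [hφ, MvPolynomial.aeval_rename]
    have hgι : g ∘ ι = MvPolynomial.X := by
      funext j
      show (if h : ((ι j : Fin (N + 1)) : ℕ) < m + 1
          then MvPolynomial.X (⟨(ι j : Fin (N + 1)), h⟩ : Fin (m + 1)) else 0)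
        = MvPolynomial.X j
      rw [dif_pos (show ((ι j : Fin (N + 1)) : ℕ) < m + 1 from j.isLt)]
      congr 1
    rw [hgι, MvPolynomial.aeval_X_left_apply]
  have hφX : ∀ i : Fin (N + 1), m < (i : ℕ) → φ (MvPolynomial.X i) = 0 := by
    intro i hi
    rw [hφ, MvPolynomial.aeval_X]
    exact dif_neg (by omega)
  have hφf : φ f = f₀ := by rw [hf']; exact hφrename f₀
  -- the "extra variables" ideal
  set J : Ideal (MvPolynomial (Fin (N + 1)) ℂ) :=
    Ideal.span (MvPolynomial.X '' {i : Fin (N + 1) | m < (i : ℕ)}) with hJ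
  have hXJ : ∀ i : Fin (N + 1), m < (i : ℕ) → MvPolynomial.X i ∈ J := by
    intro i hi
    exact Ideal.subset_span ⟨i, hi, rfl⟩
  have hkerJ : ∀ p : MvPolynomial (Fin (N + 1)) ℂ,
      p - MvPolynomial.rename ι (φ p) ∈ J := by
    intro p
    induction p using MvPolynomial.induction_on with
    | C a =>
        have : φ (MvPolynomial.C a) = MvPolynomial.C a := by
          rw [hφ]; simp
        rw [this, MvPolynomial.rename_C, sub_self]
        exact J.zero_mem
    | add p q hp hq =>
        have : (p + q) - MvPolynomial.rename ι (φ (p + q))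
            = (p - MvPolynomial.rename ι (φ p)) + (q - MvPolynomial.rename ι (φ q)) := by
          rw [map_add, map_add]; ring
        rw [this]
        exact J.add_mem hp hq
    | mul_X p i hp =>
        by_cases hi : (i : ℕ) < m + 1
        · have hφXi : φ (MvPolynomial.X i) = MvPolynomial.X (⟨i, hi⟩ : Fin (m + 1)) := by
            rw [hφ, MvPolynomial.aeval_X]; exact dif_pos hi
          have hren : MvPolynomial.rename ι
                (MvPolynomial.X (⟨i, hi⟩ : Fin (m + 1)) : MvPolynomial (Fin (m + 1)) ℂ)
              = MvPolynomial.X i := by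
            rw [MvPolynomial.rename_X]
            congr 1
          have : p * MvPolynomial.X i - MvPolynomial.rename ι (φ (p * MvPolynomial.X i))
              = (p - MvPolynomial.rename ι (φ p)) * MvPolynomial.X i := by
            rw [map_mul, map_mul, hφXi, hren]; ring
          rw [this]
          exact Ideal.mul_mem_right _ _ hp
        · have : φ (p * MvPolynomial.X i) = 0 := by
            rw [map_mul, hφX i (by omega), mul_zero]
          rw [this, map_zero, sub_zero]
          exact Ideal.mul_mem_left _ _ (hXJ i (by omega))
  have hJI : J ≤ I := by
    rw [hI, hJ]
    exact Ideal.span_mono (Set.subset_insert _ _)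
  have hfI : f ∈ I := by
    rw [hI]
    exact Ideal.subset_span (Set.mem_insert _ _)
  -- ideal membership criterion
  have hmem : ∀ p : MvPolynomial (Fin (N + 1)) ℂ, p ∈ I ↔ φ p ∈ Ideal.span {f₀} := by
    intro p
    constructor
    · intro hp
      have h1 : φ p ∈ Ideal.map (φ : MvPolynomial (Fin (N + 1)) ℂ →+* MvPolynomial (Fin (m + 1)) ℂ) I :=
        Ideal.mem_map_of_mem _ hp
      have h2 : Ideal.map (φ : MvPolynomial (Fin (N + 1)) ℂ →+* MvPolynomial (Fin (m + 1)) ℂ) I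
          ≤ Ideal.span {f₀} := by
        rw [hI, Ideal.map_span, Ideal.span_le]
        rintro x ⟨y, hy, rfl⟩
        rw [SetLike.mem_coe]
        show φ y ∈ Ideal.span {f₀}
        rcases Set.mem_insert_iff.mp hy with heq | ⟨i, hi, rfl⟩
        · rw [heq, hφf]
          exact Ideal.subset_span rfl
        · rw [hφX i hi]
          exact (Ideal.span {f₀}).zero_mem
      exact h2 h1
    · intro hp
      obtain ⟨c, hc⟩ := Ideal.mem_span_singleton'.mp hp
      have key : p = MvPolynomial.rename ι c * f + (p - MvPolynomial.rename ι (φ p)) := by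
        rw [hf', ← hc, map_mul]; ring
      rw [key]
      exact I.add_mem (Ideal.mul_mem_left _ _ hfI) (hJI (hkerJ p))
  -- the graded pieces
  set ST := MvPolynomial.homogeneousSubmodule (Fin (N + 1)) ℂ T with hST
  set RT := MvPolynomial.homogeneousSubmodule (Fin (m + 1)) ℂ T with hRT
  haveI : FiniteDimensional ℂ RT := fd_homogeneous m T
  have hΨmem : ∀ p : MvPolynomial (Fin (N + 1)) ℂ, p ∈ ST → φ p ∈ RT := by
    intro p hp
    rw [hST, MvPolynomial.mem_homogeneousSubmodule] at hp
    rw [hRT, MvPolynomial.mem_homogeneousSubmodule]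
    have := hp.aeval g hghom
    rwa [one_mul] at this
  set Ψ : ST →ₗ[ℂ] RT :=
    LinearMap.codRestrict RT (φ.toLinearMap.domRestrict ST) (fun x => hΨmem x.1 x.2) with hΨ
  set Q : Submodule ℂ RT :=
    Submodule.comap RT.subtype ((Ideal.span {f₀}).restrictScalars ℂ) with hQ
  have hθsurj : Function.Surjective (Q.mkQ ∘ₗ Ψ) := by
    have hΨsurj : Function.Surjective Ψ := by
      intro q
      refine ⟨⟨MvPolynomial.rename ι q.1, ?_⟩, ?_⟩
      · rw [hST, MvPolynomial.mem_homogeneousSubmodule]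
        exact ((MvPolynomial.mem_homogeneousSubmodule _ _).mp q.2).rename_isHomogeneous
      · exact Subtype.ext (hφrename q.1)
    exact (Submodule.mkQ_surjective Q).comp hΨsurj
  have hker : LinearMap.ker (Q.mkQ ∘ₗ Ψ)
      = Submodule.comap ST.subtype (I.restrictScalars ℂ) := by
    ext x
    simp only [LinearMap.mem_ker, LinearMap.comp_apply, Submodule.mkQ_apply,
      Submodule.Quotient.mk_eq_zero, Submodule.mem_comap, Submodule.restrictScalars_mem,
      Submodule.subtype_apply]
    have : Ψ x ∈ Q ↔ φ x.1 ∈ Ideal.span {f₀} := Iff.rfl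
    rw [this]
    exact (hmem x.1).symm
  have e1 : (↥ST ⧸ Submodule.comap ST.subtype (I.restrictScalars ℂ)) ≃ₗ[ℂ] (↥RT ⧸ Q) :=
    (Submodule.quotEquivOfEq _ _ hker.symm).trans
      (LinearMap.quotKerEquivOfSurjective _ hθsurj)
  -- dimension of Q
  set RTd := MvPolynomial.homogeneousSubmodule (Fin (m + 1)) ℂ (T - d) with hRTd
  have hμmem : ∀ c : MvPolynomial (Fin (m + 1)) ℂ, c ∈ RTd → f₀ * c ∈ RT := by
    intro c hc
    rw [hRTd, MvPolynomial.mem_homogeneousSubmodule] at hc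
    rw [hRT, MvPolynomial.mem_homogeneousSubmodule]
    have := hf.mul hc
    rwa [Nat.add_sub_cancel' hdT] at this
  set μ : RTd →ₗ[ℂ] RT :=
    LinearMap.codRestrict RT ((LinearMap.mulLeft ℂ f₀).domRestrict RTd)
      (fun x => hμmem x.1 x.2) with hμ
  have hμinj : Function.Injective μ := by
    intro a b hab
    have h1 : f₀ * a.1 = f₀ * b.1 := congrArg Subtype.val hab
    exact Subtype.ext (mul_left_cancel₀ hf0 h1)
  have hrange : LinearMap.range μ = Q := by
    ext x
    constructor
    · rintro ⟨y, rfl⟩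
      show f₀ * y.1 ∈ (Ideal.span {f₀} : Ideal (MvPolynomial (Fin (m + 1)) ℂ))
      exact Ideal.mem_span_singleton.mpr (dvd_mul_right _ _)
    · intro hx
      have hx' : x.1 ∈ (Ideal.span {f₀} : Ideal (MvPolynomial (Fin (m + 1)) ℂ)) := hx
      obtain ⟨c, hc⟩ := Ideal.mem_span_singleton'.mp hx'
      refine ⟨⟨MvPolynomial.homogeneousComponent (T - d) c, ?_⟩, ?_⟩
      · exact MvPolynomial.homogeneousComponent_mem (T - d) c
      · apply Subtype.ext
        show f₀ * MvPolynomial.homogeneousComponent (T - d) c = x.1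
        rw [← homogeneousComponent_mul_left hdT f₀ c hf]
        rw [mul_comm f₀ c, hc]
        rw [MvPolynomial.homogeneousComponent_of_mem x.2, if_pos rfl]
  have hQrank : Module.finrank ℂ Q = (T - d + m).choose m := by
    rw [← hrange, LinearMap.finrank_range_of_inj hμinj, hRTd, finrank_homogeneous]
  have hsum := Submodule.finrank_quotient_add_finrank Q
  have hRTrank : Module.finrank ℂ RT = (T + m).choose m := by
    rw [hRT]; exact finrank_homogeneous m T
  have e1rank := LinearEquiv.finrank_eq e1
  rw [e1rank]
  omega
end

section
/- Let n, k, m be natural numbers with 1 ≤ k and k + m ≤ n, let F be a complete flag in ℂⁿ, and let V be a ℂ-subspace of ℂⁿ with finrank V = k. Then V satisfies the Schubert conditions for the class σ_{n−k,…,n−k,n−k−m}, namely (for all i with 1 ≤ i ≤ k−1, finrank (V ⊓ F i) ≥ i) and finrank (V ⊓ F (k+m)) ≥ k, if and only if F (k−1) ≤ V and V ≤ F (k+m). (This identifies the Schubert variety Σ_{n−k,…,n−k,n−k−m}(F), the first type of m-plane in G(k,n), as {V : F_{k−1} ⊆ V ⊆ F_{k+m}}.) -/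
/-- The Schubert variety `Σ_{n-k,…,n-k,n-k-m}(F)` in `G(k,n)` is
`{V : F_{k-1} ⊆ V ⊆ F_{k+m}}`: a `k`-dimensional subspace `V` of `ℂⁿ` satisfies the Schubert
conditions `dim(V ∩ F_i) ≥ i` for `1 ≤ i ≤ k-1` and `dim(V ∩ F_{k+m}) ≥ k` if and only if
`F_{k-1} ≤ V ≤ F_{k+m}`. -/
theorem schubert_conditions_first_type
    {n k m : ℕ} (hk : 1 ≤ k) (hkmn : k + m ≤ n)
    (F : ℕ → Submodule ℂ (Fin n → ℂ)) (hFmono : Monotone F)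
    (hFrank : ∀ i ≤ n, Module.finrank ℂ (F i) = i)
    (V : Submodule ℂ (Fin n → ℂ)) (hV : Module.finrank ℂ V = k) :
    ((∀ i, 1 ≤ i → i ≤ k - 1 → i ≤ Module.finrank ℂ ↥(V ⊓ F i)) ∧
        k ≤ Module.finrank ℂ ↥(V ⊓ F (k + m))) ↔
      (F (k - 1) ≤ V ∧ V ≤ F (k + m)) := by
  constructor
  · rintro ⟨h1, h2⟩
    have hVle : V ≤ F (k + m) := by
      have hle : V ⊓ F (k + m) ≤ V := inf_le_left
      have : V ⊓ F (k + m) = V :=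
        Submodule.eq_of_le_of_finrank_le hle (by omega)
      rw [← this]; exact inf_le_right
    refine ⟨?_, hVle⟩
    rcases Nat.lt_or_ge 1 k with hk1 | hk1
    · -- k ≥ 2 case
      have hik : k - 1 ≤ Module.finrank ℂ ↥(V ⊓ F (k - 1)) :=
        h1 (k - 1) (by omega) le_rfl
      have hrk : Module.finrank ℂ (F (k - 1)) = k - 1 := hFrank _ (by omega)
      have hle : V ⊓ F (k - 1) ≤ F (k - 1) := inf_le_right
      have : V ⊓ F (k - 1) = F (k - 1) :=
        Submodule.eq_of_le_of_finrank_le hle (by omega)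
      rw [← this]; exact inf_le_left
    · -- k = 1 case: F 0 has rank 0
      have hk0 : k = 1 := le_antisymm hk1 hk
      have : F (k - 1) = ⊥ := by
        have := hFrank (k - 1) (by omega)
        rw [hk0] at this ⊢
        simpa using Submodule.finrank_eq_zero.mp this
      simp [this]
  · rintro ⟨h1, h2⟩
    constructor
    · intro i hi1 hik
      have : F i ≤ V := le_trans (hFmono (by omega)) h1
      have heq : V ⊓ F i = F i := inf_eq_right.mpr this
      rw [heq, hFrank i (by omega)]
    · have heq : V ⊓ F (k + m) = V := inf_eq_left.mpr h2
      rw [heq, hV]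
end

section
/- Let n, k, m be natural numbers with 1 ≤ m ≤ k and k + 1 ≤ n, let F be a complete flag in ℂⁿ, and let V be a ℂ-subspace of ℂⁿ with finrank V = k. Then V satisfies the Schubert conditions for the class σ_{n−k,…,n−k,n−k−1,…,n−k−1} (with m entries equal to n−k−1), namely (for all i with 1 ≤ i ≤ k−m, finrank (V ⊓ F i) ≥ i) and (for all i with k−m+1 ≤ i ≤ k, finrank (V ⊓ F (i+1)) ≥ i), if and only if F (k−m) ≤ V and V ≤ F (k+1). (This identifies the second type of m-plane in G(k,n) as {V : F_{k−m} ⊆ V ⊆ F_{k+1}}.) -/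
/-- The Schubert variety `Σ_{n-k,…,n-k,n-k-1,…,n-k-1}(F)` (with `m` entries `n-k-1`) in
`G(k,n)` is `{V : F_{k-m} ⊆ V ⊆ F_{k+1}}`: a `k`-dimensional subspace `V` of `ℂⁿ` satisfies
`dim(V ∩ F_i) ≥ i` for `1 ≤ i ≤ k-m` and `dim(V ∩ F_{i+1}) ≥ i` for `k-m+1 ≤ i ≤ k`
if and only if `F_{k-m} ≤ V ≤ F_{k+1}`. -/
theorem schubert_conditions_second_type
    {n k m : ℕ} (hm : 1 ≤ m) (hmk : m ≤ k) (hkn : k + 1 ≤ n)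
    (F : ℕ → Submodule ℂ (Fin n → ℂ)) (hFmono : Monotone F)
    (hFrank : ∀ i ≤ n, Module.finrank ℂ (F i) = i)
    (V : Submodule ℂ (Fin n → ℂ)) (hV : Module.finrank ℂ V = k) :
    ((∀ i, 1 ≤ i → i ≤ k - m → i ≤ Module.finrank ℂ ↥(V ⊓ F i)) ∧
        (∀ i, k - m + 1 ≤ i → i ≤ k → i ≤ Module.finrank ℂ ↥(V ⊓ F (i + 1)))) ↔
      (F (k - m) ≤ V ∧ V ≤ F (k + 1)) := by
  constructor
  · rintro ⟨h1, h2⟩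
    constructor
    · rcases Nat.eq_zero_or_pos (k - m) with h0 | hpos
      · rw [h0]
        have h := hFrank 0 (Nat.zero_le n)
        rw [Submodule.finrank_eq_zero.mp h]
        exact bot_le
      · have hc := h1 (k - m) hpos le_rfl
        have hle : V ⊓ F (k - m) ≤ F (k - m) := inf_le_right
        have heq : V ⊓ F (k - m) = F (k - m) :=
          Submodule.eq_of_le_of_finrank_le hle
            (by rw [hFrank (k - m) (by omega)]; exact hc)
        rw [← heq]; exact inf_le_left
    · have hc := h2 k (by omega) le_rfl
      have hle : V ⊓ F (k + 1) ≤ V := inf_le_left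
      have heq : V ⊓ F (k + 1) = V :=
        Submodule.eq_of_le_of_finrank_le hle (by rw [hV]; exact hc)
      rw [← heq]; exact inf_le_right
  · rintro ⟨hFV, hVF⟩
    constructor
    · intro i hi1 hi2
      have hle : F i ≤ V := (hFmono hi2).trans hFV
      rw [inf_eq_right.mpr hle, hFrank i (by omega)]
    · intro i hi1 hi2
      have hsup : Module.finrank ℂ ↥(V ⊔ F (i + 1)) ≤ k + 1 := by
        have hle : V ⊔ F (i + 1) ≤ F (k + 1) := sup_le hVF (hFmono (by omega))
        calc Module.finrank ℂ ↥(V ⊔ F (i + 1)) ≤ Module.finrank ℂ ↥(F (k + 1)) :=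
              Submodule.finrank_mono hle
          _ = k + 1 := hFrank _ hkn
      have hdim := Submodule.finrank_sup_add_finrank_inf_eq V (F (i + 1))
      have hF : Module.finrank ℂ ↥(F (i + 1)) = i + 1 := hFrank _ (by omega)
      omega
end
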